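/- Let Y ∈ ℝ^{D×N} with 1 ≤ K ≤ D. There exists a single pair (X, Γ) ∈ ℝ^{K×N} × ℝ^{D×K} that simultaneously globally minimizes every b-truncation cost: for every b ∈ {1,…,K} and every (X', Γ') ∈ ℝ^{K×N} × ℝ^{D×K}, ‖Y − Γ^{(b)} X^{(b)}‖_F² ≤ ‖Y − Γ'^{(b)} X'^{(b)}‖_F². In particular, the minimum of the nested dropout cost equals the p-weighted sum of the minima of the individual b-truncation costs, for any probability mass function p on {1,…,K}. -/

import Mathlib

/-! Eckart–Young. Let `u₁, u₂, …` be eigenvectors of `Y Yᵀ`, sorted by decreasing eigenvalues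
`λ₁ ≥ λ₂ ≥ ⋯ ≥ 0`. Taking `u₁, …, u_K` as the columns of `Γ` and `X = Γᵀ Y` makes every
truncation `Γ⁽ᵇ⁾ X⁽ᵇ⁾` the orthogonal projection of `Y` onto `span (u₁, …, u_b)`, with cost
`‖Y‖² - (λ₁ + ⋯ + λ_b)`. Conversely the columns of any `Γ'⁽ᵇ⁾ X'⁽ᵇ⁾` lie in a subspace `W` of
dimension at most `b`; for an orthonormal basis `f` of `W` the cost is at least
`‖Y‖² - ∑ₗ ⟪Y Yᵀ fₗ, fₗ⟫`, and by Ky Fan's maximum principle `∑ₗ ⟪Y Yᵀ fₗ, fₗ⟫ ≤ λ₁ + ⋯ + λ_b`.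
Since the same pair is optimal for every `b`, it also minimizes every nonnegative mixture. -/

open Matrix BigOperators

/-- The `b`-truncation cost `C⁽ᵇ⁾(X,Γ) = ‖Y − Γ⁽ᵇ⁾ X⁽ᵇ⁾‖_F²`, where `Γ⁽ᵇ⁾ X⁽ᵇ⁾`
uses only the first `b` columns of `Γ` and first `b` rows of `X`. -/
noncomputable def truncCost {D N K : ℕ} (Y : Matrix (Fin D) (Fin N) ℝ)
    (X : Matrix (Fin K) (Fin N) ℝ) (G : Matrix (Fin D) (Fin K) ℝ) (b : ℕ) : ℝ :=
  ∑ i, ∑ j, (Y i j - ∑ k : Fin K, if (k : ℕ) < b then G i k * X k j else 0) ^ 2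

/-- The nested dropout cost: mixture of the `b`-truncation costs, `b = 1, …, K`,
with mixing weights `p`. Here `b : Fin K` represents the truncation index `b+1`. -/
noncomputable def ndCost {D N K : ℕ} (Y : Matrix (Fin D) (Fin N) ℝ) (p : Fin K → ℝ)
    (X : Matrix (Fin K) (Fin N) ℝ) (G : Matrix (Fin D) (Fin K) ℝ) : ℝ :=
  ∑ b : Fin K, p b * truncCost Y X G ((b : ℕ) + 1)

open Finset InnerProductSpace Module
open scoped RealInnerProductSpace

theorem sum_mul_le_sum_of_sum_le_card {ι : Type*} [Fintype ι] [DecidableEq ι]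
    {lam t : ι → ℝ} {s : Finset ι} (hlam : 0 ≤ lam) (hs : ∀ i ∈ s, ∀ j ∉ s, lam j ≤ lam i)
    (ht0 : ∀ i, 0 ≤ t i) (ht1 : ∀ i, t i ≤ 1) (hts : ∑ i, t i ≤ #s) :
    ∑ i, lam i * t i ≤ ∑ i ∈ s, lam i := by
  -- With a threshold `μ ≥ 0` between the values of `lam` on and off `s`, the deficit is at least
  -- `μ (#s - ∑ t) ≥ 0`.
  obtain ⟨μ, hμ0, hμs, hμsc⟩ :
      ∃ μ, 0 ≤ μ ∧ (∀ i ∈ s, μ ≤ lam i) ∧ ∀ j ∉ s, lam j ≤ μ := by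
    rcases sᶜ.eq_empty_or_nonempty with h | ⟨j₀, hj₀⟩
    · refine ⟨0, le_rfl, fun i _ => hlam i, fun j hj => ?_⟩
      simpa [h] using mem_compl.2 hj
    · exact ⟨sᶜ.sup' ⟨j₀, hj₀⟩ lam, (hlam j₀).trans (le_sup' lam hj₀),
        fun i hi => sup'_le _ _ fun j hj => hs i hi j (mem_compl.1 hj),
        fun j hj => le_sup' lam (mem_compl.2 hj)⟩
  calc ∑ i, lam i * t i = ∑ i ∈ s, lam i * t i + ∑ i ∈ sᶜ, lam i * t i :=
        (sum_add_sum_compl s _).symm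
    _ ≤ ∑ i ∈ s, (lam i + μ * (t i - 1)) + ∑ i ∈ sᶜ, μ * t i := by
        refine add_le_add (sum_le_sum fun i hi => ?_) (sum_le_sum fun i hi => ?_)
        · nlinarith [mul_nonneg (sub_nonneg.2 (hμs i hi)) (sub_nonneg.2 (ht1 i))]
        · exact mul_le_mul_of_nonneg_right (hμsc i (mem_compl.1 hi)) (ht0 i)
    _ = ∑ i ∈ s, lam i + μ * (∑ i, t i - #s) := by
        rw [sum_add_distrib, ← mul_sum, ← mul_sum, ← sum_add_sum_compl s t]
        simp only [sum_sub_distrib, sum_const, nsmul_eq_mul, mul_one]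
        ring
    _ ≤ ∑ i ∈ s, lam i :=
        add_le_of_nonpos_right (mul_nonpos_of_nonneg_of_nonpos hμ0 (sub_nonpos.2 hts))

section Spectral

variable {E : Type*} [NormedAddCommGroup E] [InnerProductSpace ℝ E] [FiniteDimensional ℝ E]
  {T : E →ₗ[ℝ] E} {d : ℕ}

theorem LinearMap.IsSymmetric.inner_apply_self_eq_sum (hT : T.IsSymmetric)
    (hd : finrank ℝ E = d) (v : E) :
    ⟪T v, v⟫ = ∑ i, hT.eigenvalues hd i * ⟪hT.eigenvectorBasis hd i, v⟫ ^ 2 := by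
  rw [← (hT.eigenvectorBasis hd).sum_inner_mul_inner (T v) v]
  refine sum_congr rfl fun i _ => ?_
  rw [hT, hT.apply_eigenvectorBasis, real_inner_smul_right, real_inner_comm v]
  simp only [RCLike.ofReal_real_eq_id, id_eq]
  ring

/-- Ky Fan's maximum principle. -/
theorem LinearMap.IsPositive.sum_inner_apply_le_sum_eigenvalues (hT : T.IsPositive)
    (hd : finrank ℝ E = d) {κ : Type*} [Fintype κ] {f : κ → E} (hf : Orthonormal ℝ f)
    {b : ℕ} (hbd : b ≤ d) (hκ : Fintype.card κ ≤ b) :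
    ∑ l, ⟪T (f l), f l⟫ ≤ ∑ k : Fin b, hT.isSymmetric.eigenvalues hd (Fin.castLE hbd k) := by
  set u := hT.isSymmetric.eigenvectorBasis hd
  set t : Fin d → ℝ := fun i => ∑ l, ⟪u i, f l⟫ ^ 2
  have ht1 (i : Fin d) : t i ≤ 1 :=
    calc t i = ∑ l, ‖⟪f l, u i⟫‖ ^ 2 := by simp [t, real_inner_comm]
      _ ≤ ‖u i‖ ^ 2 := hf.sum_inner_products_le _
      _ = 1 := by simp [u.orthonormal.1 i]
  have hts : ∑ i, t i = Fintype.card κ := by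
    simp only [t]
    rw [sum_comm]
    simp [u.sum_sq_inner_right, hf.1]
  calc ∑ l, ⟪T (f l), f l⟫ = ∑ i, hT.isSymmetric.eigenvalues hd i * t i := by
        simp only [hT.isSymmetric.inner_apply_self_eq_sum hd, t, mul_sum]
        exact sum_comm
    _ ≤ ∑ i ∈ univ.map (Fin.castLEEmb hbd), hT.isSymmetric.eigenvalues hd i := by
        refine sum_mul_le_sum_of_sum_le_card (hT.nonneg_eigenvalues hd) ?_
          (fun i => sum_nonneg fun l _ => sq_nonneg _) ht1 ?_
        · simp only [mem_map, mem_univ, true_and, Fin.castLEEmb_apply, not_exists]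
          rintro _ ⟨k, rfl⟩ j hj
          refine hT.isSymmetric.eigenvalues_antitone hd (Fin.le_def.2 ?_)
          by_contra! hjb
          exact hj ⟨j, hjb.trans k.2⟩ rfl
        · simpa [hts] using hκ
    _ = ∑ k : Fin b, hT.isSymmetric.eigenvalues hd (Fin.castLE hbd k) := sum_map _ _ _

end Spectral

section Approximation

variable {E : Type*} [NormedAddCommGroup E] [InnerProductSpace ℝ E]

theorem Orthonormal.norm_sub_sum_inner_smul_sq {κ : Type*} [Fintype κ] {w : κ → E}
    (hw : Orthonormal ℝ w) (x : E) :
    ‖x - ∑ k, ⟪w k, x⟫ • w k‖ ^ 2 = ‖x‖ ^ 2 - ∑ k, ⟪w k, x⟫ ^ 2 := by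
  have hcross : ⟪x, ∑ k, ⟪w k, x⟫ • w k⟫ = ∑ k, ⟪w k, x⟫ ^ 2 := by
    simp only [inner_sum, real_inner_smul_right, real_inner_comm x, sq]
  have hnorm : ‖∑ k, ⟪w k, x⟫ • w k‖ ^ 2 = ∑ k, ⟪w k, x⟫ ^ 2 := by
    rw [← real_inner_self_eq_norm_sq, hw.inner_sum]
    simp [sq]
  rw [norm_sub_sq_real, hcross, hnorm]
  ring

theorem Submodule.norm_sq_sub_sum_inner_sq_le {W : Submodule ℝ E} [FiniteDimensional ℝ W]
    {κ : Type*} [Fintype κ] (f : OrthonormalBasis κ ℝ W) (x : E) {m : E} (hm : m ∈ W) :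
    ‖x‖ ^ 2 - ∑ l, ⟪(f l : E), x⟫ ^ 2 ≤ ‖x - m‖ ^ 2 := by
  have hproj : ∑ l, ⟪(f l : E), x⟫ ^ 2 = ‖W.starProjection x‖ ^ 2 := by
    simp only [← W.inner_orthogonalProjectionOnto_eq_of_mem_left, f.sum_sq_inner_right]
    rfl
  have hmin : ‖x - W.starProjection x‖ ≤ ‖x - m‖ := by
    rw [W.starProjection_minimal]
    exact ciInf_le ⟨0, by rintro _ ⟨_, rfl⟩; positivity⟩ (⟨m, hm⟩ : W)
  calc ‖x‖ ^ 2 - ∑ l, ⟪(f l : E), x⟫ ^ 2 = ‖x - W.starProjection x‖ ^ 2 := by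
        rw [hproj, W.norm_sq_eq_add_norm_sq_starProjection x, W.starProjection_orthogonal_val]
        ring
    _ ≤ ‖x - m‖ ^ 2 := by gcongr

end Approximation

section Scatter

variable {E : Type*} [NormedAddCommGroup E] [InnerProductSpace ℝ E] {ι : Type*} [Fintype ι]
  (y : ι → E)

/-- For the columns `yⱼ` of a matrix `Y` this is `Y Yᵀ`. -/
noncomputable def scatter : E →L[ℝ] E := ∑ j, rankOne ℝ (y j) (y j)

theorem inner_scatter_apply_self (v : E) : ⟪scatter y v, v⟫ = ∑ j, ⟪y j, v⟫ ^ 2 := by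
  simp [scatter, sum_inner, real_inner_smul_left, sq]

theorem isPositive_scatter : (scatter y).IsPositive :=
  ContinuousLinearMap.isPositive_sum _ fun j _ => isPositive_rankOne_self (y j)

variable [FiniteDimensional ℝ E] {d : ℕ} (hd : finrank ℝ E = d) {b : ℕ} (hbd : b ≤ d)

theorem sum_norm_sq_sub_sum_eigenvalues_scatter_le {κ : Type*} [Fintype κ]
    (hκ : Fintype.card κ ≤ b) (g : κ → E) (c : κ → ι → ℝ) :
    ∑ j, ‖y j‖ ^ 2
        - ∑ k : Fin b, (isPositive_scatter y).isSymmetric.eigenvalues hd (Fin.castLE hbd k)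
      ≤ ∑ j, ‖y j - ∑ k, c k j • g k‖ ^ 2 := by
  set W := Submodule.span ℝ (Set.range g)
  set f := stdOrthonormalBasis ℝ W
  have hW : Fintype.card (Fin (finrank ℝ W)) ≤ b := by
    simpa [Set.finrank, W] using (finrank_range_le_card g).trans hκ
  have hf : Orthonormal ℝ fun l => (f l : E) := f.orthonormal.comp_linearIsometry W.subtypeₗᵢ
  have hmem (j : ι) : ∑ k, c k j • g k ∈ W :=
    Submodule.sum_mem _ fun k _ => Submodule.smul_mem _ _ (Submodule.subset_span ⟨k, rfl⟩)
  calc ∑ j, ‖y j‖ ^ 2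
        - ∑ k : Fin b, (isPositive_scatter y).isSymmetric.eigenvalues hd (Fin.castLE hbd k)
      ≤ ∑ j, ‖y j‖ ^ 2 - ∑ l, ⟪scatter y (f l), (f l : E)⟫ := by
        gcongr
        exact (isPositive_scatter y).toLinearMap.sum_inner_apply_le_sum_eigenvalues hd hf hbd hW
    _ = ∑ j, (‖y j‖ ^ 2 - ∑ l, ⟪(f l : E), y j⟫ ^ 2) := by
        simp only [inner_scatter_apply_self, sum_sub_distrib, real_inner_comm (y _)]
        rw [sum_comm]
    _ ≤ ∑ j, ‖y j - ∑ k, c k j • g k‖ ^ 2 :=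
        sum_le_sum fun j _ => W.norm_sq_sub_sum_inner_sq_le f (y j) (hmem j)

theorem sum_norm_sub_sum_inner_eigenvectorBasis_scatter_sq :
    ∑ j, ‖y j - ∑ k : Fin b,
        ⟪(isPositive_scatter y).isSymmetric.eigenvectorBasis hd (Fin.castLE hbd k), y j⟫ •
          (isPositive_scatter y).isSymmetric.eigenvectorBasis hd (Fin.castLE hbd k)‖ ^ 2
      = ∑ j, ‖y j‖ ^ 2
        - ∑ k : Fin b, (isPositive_scatter y).isSymmetric.eigenvalues hd (Fin.castLE hbd k) := by
  set hT := (isPositive_scatter y).isSymmetric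
  have hw : Orthonormal ℝ fun k : Fin b => hT.eigenvectorBasis hd (Fin.castLE hbd k) :=
    (hT.eigenvectorBasis hd).orthonormal.comp _ (Fin.castLE_injective hbd)
  have heig (i : Fin d) : ∑ j, ⟪hT.eigenvectorBasis hd i, y j⟫ ^ 2 = hT.eigenvalues hd i := by
    have hu := hT.apply_eigenvectorBasis hd i
    rw [ContinuousLinearMap.coe_coe] at hu
    simp only [real_inner_comm (y _), ← inner_scatter_apply_self, hu, real_inner_smul_left,
      real_inner_self_eq_norm_sq, (hT.eigenvectorBasis hd).orthonormal.1 i]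
    simp
  simp only [hw.norm_sub_sum_inner_smul_sq, sum_sub_distrib]
  rw [sum_comm]
  simp only [heig]

end Scatter

theorem Fin.sum_ite_val_lt {M : Type*} [AddCommMonoid M] {n b : ℕ} (hb : b ≤ n) (f : Fin n → M) :
    ∑ k : Fin n, (if (k : ℕ) < b then f k else 0) = ∑ k : Fin b, f (Fin.castLE hb k) := by
  rw [← sum_filter]
  convert sum_map univ (Fin.castLEEmb hb) f using 2
  ext k
  · simpa using ⟨fun hk => ⟨⟨k, hk⟩, rfl⟩, by rintro ⟨k, rfl⟩; exact k.2⟩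
  · rfl

noncomputable def euclideanCol {m n : ℕ} (M : Matrix (Fin m) (Fin n) ℝ) (j : Fin n) :
    EuclideanSpace ℝ (Fin m) :=
  WithLp.toLp 2 (Mᵀ j)

theorem truncCost_eq_sum_norm_sq {D N K b : ℕ} (hb : b ≤ K) (Y : Matrix (Fin D) (Fin N) ℝ)
    (X : Matrix (Fin K) (Fin N) ℝ) (G : Matrix (Fin D) (Fin K) ℝ) :
    truncCost Y X G b = ∑ j, ‖euclideanCol Y j
      - ∑ k : Fin b, X (Fin.castLE hb k) j • euclideanCol G (Fin.castLE hb k)‖ ^ 2 := by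
  rw [truncCost, sum_comm]
  refine sum_congr rfl fun j _ => ?_
  rw [EuclideanSpace.norm_sq_eq]
  refine sum_congr rfl fun i _ => ?_
  simp [euclideanCol, Fin.sum_ite_val_lt hb, WithLp.ofLp_sum, mul_comm]

theorem exists_forall_truncCost_le {D N K : ℕ} (hKD : K ≤ D) (Y : Matrix (Fin D) (Fin N) ℝ) :
    ∃ (X : Matrix (Fin K) (Fin N) ℝ) (G : Matrix (Fin D) (Fin K) ℝ), ∀ b ≤ K,
      ∀ (X' : Matrix (Fin K) (Fin N) ℝ) (G' : Matrix (Fin D) (Fin K) ℝ),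
        truncCost Y X G b ≤ truncCost Y X' G' b := by
  have hd := finrank_euclideanSpace_fin (𝕜 := ℝ) (n := D)
  set u := (isPositive_scatter (euclideanCol Y)).isSymmetric.eigenvectorBasis hd
  refine ⟨.of fun k j => ⟪u (Fin.castLE hKD k), euclideanCol Y j⟫,
    .of fun i k => u (Fin.castLE hKD k) i, fun b hb X' G' => ?_⟩
  rw [truncCost_eq_sum_norm_sq hb, truncCost_eq_sum_norm_sq hb]
  convert sum_norm_sq_sub_sum_eigenvalues_scatter_le (euclideanCol Y) hd (hb.trans hKD)
    (Fintype.card_fin b).le _ _ using 1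
  exact sum_norm_sub_sum_inner_eigenvectorBasis_scatter_sq (euclideanCol Y) hd (hb.trans hKD)

theorem simultaneous_minimizer_exists_general
    {D N K : ℕ} (hKD : K ≤ D)
    (Y : Matrix (Fin D) (Fin N) ℝ) :
    ∃ (X : Matrix (Fin K) (Fin N) ℝ) (G : Matrix (Fin D) (Fin K) ℝ),
      (∀ (b : Fin K) (X' : Matrix (Fin K) (Fin N) ℝ) (G' : Matrix (Fin D) (Fin K) ℝ),
        truncCost Y X G ((b : ℕ) + 1) ≤ truncCost Y X' G' ((b : ℕ) + 1)) ∧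
      (∀ p : Fin K → ℝ, (∀ b, 0 ≤ p b) → (∑ b, p b = 1) →
        ((∀ b : Fin K, IsLeast
            (Set.range fun q : Matrix (Fin K) (Fin N) ℝ × Matrix (Fin D) (Fin K) ℝ =>
              truncCost Y q.1 q.2 ((b : ℕ) + 1))
            (truncCost Y X G ((b : ℕ) + 1))) ∧
          IsLeast
            (Set.range fun q : Matrix (Fin K) (Fin N) ℝ × Matrix (Fin D) (Fin K) ℝ =>
              ndCost Y p q.1 q.2)
            (∑ b : Fin K, p b * truncCost Y X G ((b : ℕ) + 1)))) := by
  obtain ⟨X, G, hXG⟩ := exists_forall_truncCost_le hKD Y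
  have hmin (b : Fin K) (X' G') := hXG (b + 1) b.2 X' G'
  refine ⟨X, G, hmin, fun p hp _ => ⟨fun b => ⟨⟨(X, G), rfl⟩, ?_⟩, ⟨(X, G), rfl⟩, ?_⟩⟩
  · rintro _ ⟨q, rfl⟩
    exact hmin b q.1 q.2
  · rintro _ ⟨q, rfl⟩
    exact sum_le_sum fun b _ => mul_le_mul_of_nonneg_left (hmin b q.1 q.2) (hp b)

/-- There exists a single pair `(X, Γ)` simultaneously globally minimizing every
`b`-truncation cost; consequently, for any probability mass function `p`, the minimum
of the nested dropout cost equals the `p`-weighted sum of the minima of the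
individual `b`-truncation costs. -/
theorem simultaneous_minimizer_exists
    {D N K : ℕ} (hK : 1 ≤ K) (hKD : K ≤ D)
    (Y : Matrix (Fin D) (Fin N) ℝ) :
    ∃ (X : Matrix (Fin K) (Fin N) ℝ) (G : Matrix (Fin D) (Fin K) ℝ),
      (∀ (b : Fin K) (X' : Matrix (Fin K) (Fin N) ℝ) (G' : Matrix (Fin D) (Fin K) ℝ),
        truncCost Y X G ((b : ℕ) + 1) ≤ truncCost Y X' G' ((b : ℕ) + 1)) ∧
      (∀ p : Fin K → ℝ, (∀ b, 0 ≤ p b) → (∑ b, p b = 1) →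
        ((∀ b : Fin K, IsLeast
            (Set.range fun q : Matrix (Fin K) (Fin N) ℝ × Matrix (Fin D) (Fin K) ℝ =>
              truncCost Y q.1 q.2 ((b : ℕ) + 1))
            (truncCost Y X G ((b : ℕ) + 1))) ∧
          IsLeast
            (Set.range fun q : Matrix (Fin K) (Fin N) ℝ × Matrix (Fin D) (Fin K) ℝ =>
              ndCost Y p q.1 q.2)
            (∑ b : Fin K, p b * truncCost Y X G ((b : ℕ) + 1)))) :=
  simultaneous_minimizer_exists_general hKD Y
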